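/- arXiv:2405.06670 — 2 statements merged into one kernel-verified Lean document; each statement's English description precedes it below -/
import Mathlib

section
/- Let n ≥ 1, let x ∈ ℝ^n be sorted in nonincreasing order (x_1 ≥ x_2 ≥ … ≥ x_n), and let p ∈ {0,1}^n be a binary vector with p_k = 1 for at least one index k. Then the averaged max closed form is exact: Σ_{i=1}^n x_i · p_i · Π_{j=1}^{i-1} (1 - p_j) = max{ x_i : p_i = 1 }. -/
open Finset

/-- The masked maximum `max { x_i : p_i = 1 }`. -/
noncomputable def maskedMax {n : ℕ} (x p : Fin n → ℝ) : ℝ :=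
  sSup {y : ℝ | ∃ i, p i = 1 ∧ x i = y}

/-- For `x ∈ ℝ^n` sorted in nonincreasing order and a binary vector `p ∈ {0,1}^n`
with some `p_k = 1`, the averaged max closed form is exact:
`Σ_i x_i·p_i·Π_{j<i} (1-p_j) = max { x_i : p_i = 1 }`. -/
theorem averaged_max_exact (n : ℕ) (hn : 1 ≤ n) (x p : Fin n → ℝ)
    (hsort : Antitone x) (hp : ∀ i, p i = 0 ∨ p i = 1) (hnz : ∃ k, p k = 1) :
    ∑ i, x i * p i * ∏ j ∈ Finset.univ.filter (fun j => j < i), (1 - p j)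
      = maskedMax x p := by
  obtain ⟨k, hk⟩ := hnz
  set S : Finset (Fin n) := Finset.univ.filter (fun i => p i = 1) with hS
  have hSne : S.Nonempty := ⟨k, by simp [hS, hk]⟩
  set i0 : Fin n := S.min' hSne with hi0
  have hpi0 : p i0 = 1 := by
    have := S.min'_mem hSne
    simpa [hS] using this
  have hmin : ∀ i, p i = 1 → i0 ≤ i := by
    intro i hi
    exact S.min'_le i (by simp [hS, hi])
  -- Sum equals x i0
  have hsum : (∑ i, x i * p i * ∏ j ∈ Finset.univ.filter (fun j => j < i), (1 - p j))
      = x i0 := by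
    rw [Finset.sum_eq_single i0]
    · have hprod : (∏ j ∈ Finset.univ.filter (fun j => j < i0), (1 - p j)) = 1 := by
        apply Finset.prod_eq_one
        intro j hj
        have hji : j < i0 := (Finset.mem_filter.mp hj).2
        rcases hp j with h0 | h1
        · simp [h0]
        · exact absurd (hmin j h1) (not_le.mpr hji)
      rw [hprod, hpi0]; ring
    · intro i _ hne
      rcases hp i with h0 | h1
      · simp [h0]
      · have hlt : i0 < i := lt_of_le_of_ne (hmin i h1) (Ne.symm hne)
        have : (∏ j ∈ Finset.univ.filter (fun j => j < i), (1 - p j)) = 0 :=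
          Finset.prod_eq_zero (i := i0) (Finset.mem_filter.mpr ⟨Finset.mem_univ _, hlt⟩) (by simp [hpi0])
        simp [this]
    · intro h; exact absurd (Finset.mem_univ i0) h
  rw [hsum, maskedMax]
  symm
  apply IsGreatest.csSup_eq
  constructor
  · exact ⟨i0, hpi0, rfl⟩
  · rintro y ⟨i, hi, rfl⟩
    exact hsort (hmin i hi)
end

section
/- Let n ≥ 1, let x ∈ ℝ^n be sorted in nonincreasing order (x_1 ≥ x_2 ≥ … ≥ x_n), and let p ∈ {0,1}^n be a binary vector with p_k = 1 for at least one index k. Then the averaged min closed form is exact: Σ_{i=1}^n x_i · p_i · Π_{j=i+1}^{n} (1 - p_j) = min{ x_i : p_i = 1 }. -/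
open Finset

/-- The masked minimum `min { x_i : p_i = 1 }`. -/
noncomputable def maskedMin {n : ℕ} (x p : Fin n → ℝ) : ℝ :=
  sInf {y : ℝ | ∃ i, p i = 1 ∧ x i = y}

/-- For `x ∈ ℝ^n` sorted in nonincreasing order and a binary vector `p ∈ {0,1}^n`
with some `p_k = 1`, the averaged min closed form is exact:
`Σ_i x_i·p_i·Π_{j>i} (1-p_j) = min { x_i : p_i = 1 }`. -/
theorem averaged_min_exact (n : ℕ) (hn : 1 ≤ n) (x p : Fin n → ℝ)
    (hsort : Antitone x) (hp : ∀ i, p i = 0 ∨ p i = 1) (hnz : ∃ k, p k = 1) :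
    ∑ i, x i * p i * ∏ j ∈ Finset.univ.filter (fun j => i < j), (1 - p j)
      = maskedMin x p := by
  classical
  set S := Finset.univ.filter (fun i => p i = 1) with hSdef
  have hS : S.Nonempty := by
    obtain ⟨k, hk⟩ := hnz; exact ⟨k, by simp [hSdef, hk]⟩
  set i0 := S.max' hS with hi0
  have hpi0 : p i0 = 1 := by
    have := S.max'_mem hS; simpa [hSdef] using this
  have hmax : ∀ i, p i = 1 → i ≤ i0 := fun i hi => S.le_max' i (by simp [hSdef, hi])
  have hsum : (∑ i, x i * p i * ∏ j ∈ Finset.univ.filter (fun j => i < j), (1 - p j))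
      = x i0 := by
    rw [Finset.sum_eq_single i0]
    · have h1 : ∀ j ∈ Finset.univ.filter (fun j => i0 < j), (1 - p j) = 1 := by
        intro j hj
        simp only [Finset.mem_filter, Finset.mem_univ, true_and] at hj
        rcases hp j with h0 | h1
        · simp [h0]
        · exact absurd (hmax j h1) (not_le.mpr hj)
      rw [Finset.prod_eq_one h1, hpi0]; ring
    · intro i _ hne
      rcases hp i with h0 | h1
      · simp [h0]
      · have hlt : i < i0 := lt_of_le_of_ne (hmax i h1) hne
        have hz : (∏ j ∈ Finset.univ.filter (fun j => i < j), (1 - p j)) = 0 :=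
          Finset.prod_eq_zero (i := i0) (by simp [hlt]) (by simp [hpi0])
        rw [hz]; ring
    · intro h; exact absurd (Finset.mem_univ i0) h
  rw [hsum]
  have hset : {y : ℝ | ∃ i, p i = 1 ∧ x i = y} = x '' {i | p i = 1} := by
    ext y; simp [Set.mem_image, eq_comm]
  rw [maskedMin, hset]
  have hleast : IsLeast (x '' {i | p i = 1}) (x i0) := by
    constructor
    · exact ⟨i0, hpi0, rfl⟩
    · rintro y ⟨i, hi, rfl⟩; exact hsort (hmax i hi)
  exact hleast.csInf_eq.symm
end
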